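/- Let d2, a2, h, q > 0 and 0 ≤ x1 < L. If w is a solution of the upstream toxicant boundary value problem on [x1, L] and w(x) > 0 for all x ∈ [x1, L], then for every x ∈ [x1, L] one has w(x) ≥ w(L)·exp(−(a2/d2)·(L − x)). In particular, w(x1) ≥ w(L)·exp(−(a2/d2)·(L − x1)). -/

import Mathlib

/-- `w` is a solution of the upstream toxicant boundary value problem with
parameters `d2, a2, h, q` on the interval `[x1, L]`. -/
def IsUpstreamSolution (d2 a2 h q x1 L : ℝ) (w : ℝ → ℝ) : Prop :=
  ContDiff ℝ 2 w ∧
  (∀ x ∈ Set.Icc x1 L,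
      d2 * deriv (deriv w) x - a2 * deriv w x + h - q * w x = 0) ∧
  d2 * deriv w x1 - a2 * w x1 = 0 ∧ deriv w L = 0

private lemma upstream_aux
    (d2 a2 h q x1 L : ℝ) (w : ℝ → ℝ)
    (hd2 : 0 < d2) (ha2 : 0 < a2) (hh : 0 < h) (hq : 0 < q)
    (hx1 : 0 ≤ x1) (hx1L : x1 < L)
    (hC2 : ContDiff ℝ 2 w)
    (hODE : ∀ x ∈ Set.Icc x1 L,
      d2 * deriv (deriv w) x - a2 * deriv w x + h - q * w x = 0)
    (hBC1 : d2 * deriv w x1 - a2 * w x1 = 0) (hBC2 : deriv w L = 0)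
    (hpos : ∀ x ∈ Set.Icc x1 L, 0 < w x) :
    (∀ x ∈ Set.Icc x1 L, w x ≥ w L * Real.exp (-(a2 / d2) * (L - x))) := by
  have hdw : Differentiable ℝ w := hC2.differentiable (by norm_num)
  have hdw' : Differentiable ℝ (deriv w) := by
    have := (contDiff_succ_iff_deriv (n:=1)).mp (by exact_mod_cast hC2)
    exact this.2.2.differentiable one_ne_zero
  set φ : ℝ → ℝ := fun x => d2 * deriv w x - a2 * w x with hφdef
  have hφdiff : Differentiable ℝ φ :=
    (hdw'.const_mul d2).sub (hdw.const_mul a2)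
  have hφderiv : ∀ x, deriv φ x = d2 * deriv (deriv w) x - a2 * deriv w x := by
    intro x
    rw [hφdef]
    rw [deriv_fun_sub ((hdw' x).const_mul d2) ((hdw x).const_mul a2),
      deriv_const_mul d2 (hdw' x), deriv_const_mul a2 (hdw x)]
  have hφODE : ∀ x ∈ Set.Icc x1 L, deriv φ x = q * w x - h := by
    intro x hx
    have := hODE x hx
    rw [hφderiv x]; linarith
  -- φ ≤ 0 on [x1, L]
  have hφle : ∀ x ∈ Set.Icc x1 L, φ x ≤ 0 := by
    obtain ⟨c, hc, hmax⟩ := isCompact_Icc.exists_isMaxOn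
      (Set.nonempty_Icc.mpr hx1L.le) hφdiff.continuous.continuousOn
    intro x hx
    by_contra hcon
    push_neg at hcon
    have hφc : 0 < φ c := lt_of_lt_of_le hcon (hmax hx)
    have hcx1 : c ≠ x1 := by
      intro hcx; rw [hcx] at hφc; rw [hφdef] at hφc; simp only at hφc; linarith
    have hcL : c ≠ L := by
      intro hcx
      have hwL : 0 < w L := hpos L ⟨hx1L.le, le_rfl⟩
      rw [hcx] at hφc; rw [hφdef] at hφc; simp only [hBC2] at hφc; nlinarith
    have hcIoo : c ∈ Set.Ioo x1 L :=
      ⟨lt_of_le_of_ne hc.1 (Ne.symm hcx1), lt_of_le_of_ne hc.2 hcL⟩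
    have hloc : IsLocalMax φ c := hmax.isLocalMax (Icc_mem_nhds hcIoo.1 hcIoo.2)
    have hderiv0 : deriv φ c = 0 := hloc.deriv_eq_zero
    have hwc : q * w c - h = 0 := by rw [← hφODE c hc]; exact hderiv0
    -- deriv w c > 0
    have hwcpos : 0 < w c := hpos c hc
    have hw'c : 0 < deriv w c := by
      rw [hφdef] at hφc; simp only at hφc; nlinarith
    -- w x > w c for x in a right neighborhood of c
    have hslope : Filter.Tendsto (slope w c) (nhdsWithin c {c}ᶜ) (nhds (deriv w c)) :=
      hasDerivAt_iff_tendsto_slope.mp (hdw c).hasDerivAt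
    have hev : ∀ᶠ x in nhdsWithin c (Set.Ioi c), 0 < slope w c x := by
      have : ∀ᶠ x in nhdsWithin c {c}ᶜ, 0 < slope w c x :=
        hslope.eventually (eventually_gt_nhds hw'c)
      exact this.filter_mono (nhdsWithin_mono c (fun x hx => ne_of_gt hx))
    have hevL : ∀ᶠ x in nhdsWithin c (Set.Ioi c), x < L :=
      eventually_nhdsWithin_of_eventually_nhds (eventually_lt_nhds hcIoo.2)
    obtain ⟨u, hu, hsub⟩ := mem_nhdsGT_iff_exists_Ioc_subset.mp (hev.and hevL)
    have huIoc : u ∈ Set.Ioc c u := ⟨hu, le_rfl⟩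
    have huL : u < L := (hsub huIoc).2
    -- w x > w c on Ioc c u
    have hwgt : ∀ y ∈ Set.Ioc c u, w c < w y := by
      intro y hy
      have hs := (hsub hy).1
      rw [slope_def_field] at hs
      have hyc : c < y := hy.1
      have := mul_pos hs (sub_pos.mpr hyc)
      rw [div_mul_cancel₀] at this
      · linarith
      · exact ne_of_gt (sub_pos.mpr hyc)
    -- φ strictly increasing on [c,u]
    have hmono : StrictMonoOn φ (Set.Icc c u) := by
      apply strictMonoOn_of_deriv_pos (convex_Icc c u) hφdiff.continuous.continuousOn
      intro y hy
      rw [interior_Icc] at hy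
      have hyIcc : y ∈ Set.Icc x1 L :=
        ⟨le_trans hc.1 hy.1.le, le_trans hy.2.le huL.le⟩
      rw [hφODE y hyIcc]
      have := hwgt y ⟨hy.1, hy.2.le⟩
      nlinarith
    have : φ c < φ u := hmono ⟨le_rfl, hu.le⟩ ⟨hu.le, le_rfl⟩ hu
    have : φ u ≤ φ c := hmax ⟨le_trans hc.1 hu.le, huL.le⟩
    linarith
  -- ψ = w * exp(-(a2/d2) x) is antitone
  set lam : ℝ := a2 / d2 with hlam
  set ψ : ℝ → ℝ := fun x => w x * Real.exp (-lam * x) with hψdef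
  have hψD : ∀ x, HasDerivAt ψ
      (deriv w x * Real.exp (-lam * x) + w x * (Real.exp (-lam * x) * -lam)) x := by
    intro x
    have h1 : HasDerivAt w (deriv w x) x := (hdw x).hasDerivAt
    have h2 : HasDerivAt (fun y => Real.exp (-lam * y)) (Real.exp (-lam * x) * -lam) x := by
      have : HasDerivAt (fun y : ℝ => -lam * y) (-lam) x := by
        simpa using (hasDerivAt_id x).const_mul (-lam)
      exact this.exp
    exact h1.mul h2
  have hanti : AntitoneOn ψ (Set.Icc x1 L) := by
    apply antitoneOn_of_deriv_nonpos (convex_Icc x1 L)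
    · exact (Continuous.mul hdw.continuous (by continuity)).continuousOn
    · intro x hx; exact (hψD x).differentiableAt.differentiableWithinAt
    · intro x hx
      rw [interior_Icc] at hx
      rw [(hψD x).deriv]
      have hφx := hφle x ⟨hx.1.le, hx.2.le⟩
      rw [hφdef] at hφx; simp only at hφx
      have hE : 0 < Real.exp (-lam * x) := Real.exp_pos _
      have : deriv w x - lam * w x ≤ 0 := by
        rw [hlam]; rw [div_mul_eq_mul_div, sub_nonpos, le_div_iff₀ hd2]; nlinarith
      nlinarith
  intro x hx
  have hL : ψ L ≤ ψ x := hanti hx ⟨hx1L.le, le_rfl⟩ hx.2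
  rw [hψdef] at hL; simp only at hL
  have hexp : Real.exp (-(a2/d2) * (L - x)) * Real.exp (-lam * x) = Real.exp (-lam * L) := by
    rw [← Real.exp_add, hlam]; ring_nf
  have hEx : 0 < Real.exp (-lam * x) := Real.exp_pos _
  have key : (w L * Real.exp (-(a2/d2) * (L - x))) * Real.exp (-lam * x)
      ≤ w x * Real.exp (-lam * x) := by
    rw [mul_assoc, hexp]; exact hL
  exact le_of_mul_le_mul_right key hEx


/-- for a positive solution of the upstream problem,
`w x ≥ w L · exp (−(a2/d2)·(L − x))` on `[x1, L]`; in particular at `x1`. -/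
theorem upstream_exp_lower_bound
    (d2 a2 h q x1 L : ℝ) (w : ℝ → ℝ)
    (hd2 : 0 < d2) (ha2 : 0 < a2) (hh : 0 < h) (hq : 0 < q)
    (hx1 : 0 ≤ x1) (hx1L : x1 < L)
    (hw : IsUpstreamSolution d2 a2 h q x1 L w)
    (hpos : ∀ x ∈ Set.Icc x1 L, 0 < w x) :
    (∀ x ∈ Set.Icc x1 L, w x ≥ w L * Real.exp (-(a2 / d2) * (L - x))) ∧
      w x1 ≥ w L * Real.exp (-(a2 / d2) * (L - x1)) := by
  obtain ⟨hC2, hODE, hBC1, hBC2⟩ := hw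
  have main := upstream_aux d2 a2 h q x1 L w hd2 ha2 hh hq hx1 hx1L hC2 hODE hBC1 hBC2 hpos
  exact ⟨main, main x1 ⟨le_rfl, hx1L.le⟩⟩
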